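/- arXiv:2008.01610 — 5 statements merged into one kernel-verified Lean document; each statement's English description precedes it below -/
import Mathlib

section
/- Let A ⊆ F be a finite subset of a field and let g ∈ F[x₁,…,xₙ] be a nonzero polynomial. Then the sum over all points p ∈ Aⁿ of the order of vanishing of g at p is at most |A|^{n−1} · deg g. -/
/-!
Induct on the number of variables, singling out `x₀` and writing `x = (x₀, x')`. Let `g_d` be
the leading coefficient of `g` in `x₀`, so that `d + deg g_d ≤ deg g`. Fix `a` and a monomial `x'^m`
of lowest degree `v_a(g_d)` in `g_d(x' + a)`. Its coefficient `c(t)` in `g(t, x' + a)` is a nonzero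
polynomial of degree at most `d`, and if `b` is a root of `c` of multiplicity `k` then the monomial
`x₀^k x'^m` survives in `g(x + (b, a))`; hence `v_{(b,a)}(g) ≤ mult_b(c) + v_a(g_d)`. Summing over
`b ∈ A` gives at most `d + |A| v_a(g_d)`, and summing over `a` and applying induction to `g_d`
gives `|A|^{n-1} (d + deg g_d)`.
-/

open MvPolynomial

variable {F : Type*} [Field F]

/-- The polynomial `g` expanded around the point `p`, i.e. `g(x + p)`. -/
noncomputable def expandAt {n : ℕ} (p : Fin n → F) (g : MvPolynomial (Fin n) F) :
    MvPolynomial (Fin n) F :=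
  aeval (fun i => X i + C (p i)) g

/-- The order of vanishing of `g` at `p`: the least total degree of a monomial
appearing in the expansion of `g` around `p`. -/
noncomputable def vanishOrder {n : ℕ} (g : MvPolynomial (Fin n) F) (p : Fin n → F) : ℕ :=
  sInf {k | ∃ m ∈ (expandAt p g).support, (m.sum fun _ e => e) = k}

theorem Fin.sum_piFinset_succ {n : ℕ} {α : Fin (n + 1) → Type*} {β : Type*} [AddCommMonoid β]
    (S : ∀ i, Finset (α i)) (f : (∀ i, α i) → β) :
    ∑ p ∈ Fintype.piFinset S, f p =
      ∑ a ∈ Fintype.piFinset (Fin.tail S), ∑ b ∈ S 0, f (Fin.cons b a) := by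
  have := Finset.filter_piFinset_eq_map_consEquiv S (fun _ => True)
  simp only [Finset.filter_true] at this
  rw [this, Finset.sum_map, Finset.sum_product_right]
  rfl

namespace Polynomial

theorem sum_rootMultiplicity_le_natDegree {R : Type*} [CommRing R] [IsDomain R] (f : R[X])
    (s : Finset R) : ∑ b ∈ s, f.rootMultiplicity b ≤ f.natDegree := by
  classical
  calc ∑ b ∈ s, f.rootMultiplicity b = ∑ b ∈ s, f.roots.count b := by simp only [count_roots]
    _ ≤ ∑ b ∈ s ∪ f.roots.toFinset, f.roots.count b :=
      Finset.sum_le_sum_of_subset Finset.subset_union_left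
    _ = Multiset.card f.roots := Multiset.sum_count_eq_card fun b hb =>
        Finset.mem_union_right s (Multiset.mem_toFinset.mpr hb)
    _ ≤ f.natDegree := card_roots' f

theorem coeff_taylor_rootMultiplicity_ne_zero {R : Type*} [CommRing R] {f : R[X]} (hf : f ≠ 0)
    (b : R) : (taylor b f).coeff (f.rootMultiplicity b) ≠ 0 := by
  rw [rootMultiplicity_eq_natTrailingDegree, ← taylor_apply]
  exact trailingCoeff_nonzero_iff_nonzero.mpr ((taylor_injective b).ne_iff' (map_zero _) |>.mpr hf)

section mapLinear

variable {A R S : Type*} [CommSemiring A] [Semiring R] [Semiring S] [Module A R] [Module A S]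

noncomputable def mapLinear (φ : R →ₗ[A] S) (f : R[X]) : S[X] :=
  f.sum fun k r => monomial k (φ r)

theorem coeff_mapLinear (φ : R →ₗ[A] S) (f : R[X]) (k : ℕ) :
    (mapLinear φ f).coeff k = φ (f.coeff k) := by
  simp only [mapLinear, sum_def, finsetSum_coeff, coeff_monomial, Finset.sum_ite_eq']
  split_ifs with h
  · rfl
  · rw [notMem_support_iff.mp h, map_zero]

theorem natDegree_mapLinear_le (φ : R →ₗ[A] S) (f : R[X]) :
    (mapLinear φ f).natDegree ≤ f.natDegree :=
  natDegree_le_iff_coeff_eq_zero.mpr fun k hk => by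
    rw [coeff_mapLinear, coeff_eq_zero_of_natDegree_lt hk, map_zero]

theorem mapLinear_add (φ : R →ₗ[A] S) (f g : R[X]) :
    mapLinear φ (f + g) = mapLinear φ f + mapLinear φ g := by
  ext k
  simp only [coeff_mapLinear, coeff_add, map_add]

theorem mapLinear_monomial (φ : R →ₗ[A] S) (j : ℕ) (r : R) :
    mapLinear φ (monomial j r) = monomial j (φ r) := by
  ext k
  simp only [coeff_mapLinear, coeff_monomial, apply_ite φ, map_zero]

end mapLinear

theorem mapLinear_taylor {A R S : Type*} [CommSemiring A] [CommSemiring R] [CommSemiring S]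
    [Algebra A R] [Algebra A S] (φ : R →ₗ[A] S) (a : A) (f : R[X]) :
    mapLinear φ (taylor (algebraMap A R a) f) = taylor (algebraMap A S a) (mapLinear φ f) := by
  induction f using Polynomial.induction_on' with
  | add f g hf hg => rw [map_add, mapLinear_add, hf, hg, mapLinear_add, map_add]
  | monomial j r =>
    ext k
    -- both sides are `(j.choose k * a ^ (j - k)) • φ r`
    simp only [mapLinear_monomial, taylor_monomial, coeff_mapLinear, coeff_C_mul,
      coeff_X_add_C_pow, ← map_pow]
    rw [← map_natCast (algebraMap A R), ← map_natCast (algebraMap A S), ← map_mul, ← map_mul,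
      mul_comm, ← Algebra.smul_def, map_smul, Algebra.smul_def, mul_comm]

end Polynomial

section expandAt

variable {n : ℕ}

noncomputable def expandAtAlgHom (p : Fin n → F) :
    MvPolynomial (Fin n) F →ₐ[F] MvPolynomial (Fin n) F :=
  aeval fun i => X i + C (p i)

theorem expandAtAlgHom_apply (p : Fin n → F) (g : MvPolynomial (Fin n) F) :
    expandAtAlgHom p g = expandAt p g :=
  rfl

theorem expandAt_expandAt (p q : Fin n → F) (g : MvPolynomial (Fin n) F) :
    expandAt p (expandAt q g) = expandAt (p + q) g := by
  simp only [← expandAtAlgHom_apply, ← AlgHom.comp_apply]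
  congr 1
  ext i : 1
  simp [expandAtAlgHom, add_assoc, add_comm (C (p i))]

theorem expandAt_zero (g : MvPolynomial (Fin n) F) : expandAt 0 g = g := by
  simp [expandAt]

theorem expandAt_injective (p : Fin n → F) : Function.Injective (expandAt p) :=
  Function.LeftInverse.injective (g := expandAt (-p)) fun g => by
    rw [expandAt_expandAt, neg_add_cancel, expandAt_zero]

theorem finSuccEquiv_expandAt_cons (b : F) (a : Fin n → F) (g : MvPolynomial (Fin (n + 1)) F) :
    finSuccEquiv F n (expandAt (Fin.cons b a) g) =
      Polynomial.taylor (C b) ((finSuccEquiv F n g).map (expandAtAlgHom a)) := by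
  have : (finSuccEquiv F n).toAlgHom.comp (expandAtAlgHom (Fin.cons b a)) =
      ((Polynomial.taylorAlgHom (C b : MvPolynomial (Fin n) F)).restrictScalars F).comp
        ((Polynomial.mapAlgHom (expandAtAlgHom a)).comp (finSuccEquiv F n).toAlgHom) := by
    ext i : 1
    induction i using Fin.cases with
    | zero => simp [expandAtAlgHom, finSuccEquiv_apply]
    | succ i => simp [expandAtAlgHom, finSuccEquiv_apply]
  exact DFunLike.congr_fun this g

end expandAt

section vanishOrder

variable {n : ℕ}

theorem vanishOrder_le_degree {g : MvPolynomial (Fin n) F} {p : Fin n → F} {m : Fin n →₀ ℕ}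
    (hm : coeff m (expandAt p g) ≠ 0) : vanishOrder g p ≤ m.degree :=
  Nat.sInf_le ⟨m, mem_support_iff.mpr hm, rfl⟩

theorem exists_degree_eq_vanishOrder {g : MvPolynomial (Fin n) F} (hg : g ≠ 0)
    (p : Fin n → F) : ∃ m, coeff m (expandAt p g) ≠ 0 ∧ m.degree = vanishOrder g p := by
  have hne : expandAt p g ≠ 0 := by
    simpa [expandAt] using (expandAt_injective p).ne hg
  obtain ⟨m₀, hm₀⟩ := support_nonempty.mpr hne
  obtain ⟨m, hm, hdeg⟩ : vanishOrder g p ∈ {k | ∃ m ∈ (expandAt p g).support, m.degree = k} :=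
    Nat.sInf_mem ⟨_, m₀, hm₀, rfl⟩
  exact ⟨m, mem_support_iff.mp hm, hdeg⟩

theorem vanishOrder_fin_zero {g : MvPolynomial (Fin 0) F} (hg : g ≠ 0) (p : Fin 0 → F) :
    vanishOrder g p = 0 := by
  obtain ⟨m, -, hm⟩ := exists_degree_eq_vanishOrder hg p
  rw [← hm, Subsingleton.elim m 0, map_zero]

end vanishOrder

section line

variable {n : ℕ}

theorem leadingCoeff_finSuccEquiv_ne_zero {g : MvPolynomial (Fin (n + 1)) F} (hg : g ≠ 0) :
    (finSuccEquiv F n g).leadingCoeff ≠ 0 :=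
  Polynomial.leadingCoeff_ne_zero.mpr ((map_ne_zero_iff _ (finSuccEquiv F n).injective).mpr hg)

/-- The coefficient of `x'^m` in `g(t, x' + a)`, as a polynomial in `t`. -/
noncomputable def lineCoeff (a : Fin n → F) (m : Fin n →₀ ℕ)
    (g : MvPolynomial (Fin (n + 1)) F) : Polynomial F :=
  ((finSuccEquiv F n g).map (expandAtAlgHom a)).mapLinear (lcoeff F m)

theorem coeff_lineCoeff (a : Fin n → F) (m : Fin n →₀ ℕ) (g : MvPolynomial (Fin (n + 1)) F)
    (k : ℕ) :
    (lineCoeff a m g).coeff k = coeff m (expandAt a ((finSuccEquiv F n g).coeff k)) := by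
  rw [lineCoeff, Polynomial.coeff_mapLinear, Polynomial.coeff_map]
  rfl

theorem natDegree_lineCoeff_le (a : Fin n → F) (m : Fin n →₀ ℕ)
    (g : MvPolynomial (Fin (n + 1)) F) :
    (lineCoeff a m g).natDegree ≤ (finSuccEquiv F n g).natDegree :=
  (Polynomial.natDegree_mapLinear_le _ _).trans Polynomial.natDegree_map_le

theorem coeff_expandAt_cons (b : F) (a : Fin n → F) (k : ℕ) (m : Fin n →₀ ℕ)
    (g : MvPolynomial (Fin (n + 1)) F) :
    coeff (m.cons k) (expandAt (Fin.cons b a) g) =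
      (Polynomial.taylor b (lineCoeff a m g)).coeff k := by
  conv_rhs => rw [lineCoeff, ← Algebra.algebraMap_self_apply b, ← Polynomial.mapLinear_taylor]
  rw [← finSuccEquiv_coeff_coeff, finSuccEquiv_expandAt_cons, ← algebraMap_eq,
    Polynomial.coeff_mapLinear, lcoeff_apply]

theorem vanishOrder_cons_le (b : F) (a : Fin n → F) {m : Fin n →₀ ℕ}
    {g : MvPolynomial (Fin (n + 1)) F} (hg : lineCoeff a m g ≠ 0) :
    vanishOrder g (Fin.cons b a) ≤ (lineCoeff a m g).rootMultiplicity b + m.degree := by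
  have h := vanishOrder_le_degree (g := g) (p := Fin.cons b a)
    (m := m.cons ((lineCoeff a m g).rootMultiplicity b))
    (by rw [coeff_expandAt_cons]; exact Polynomial.coeff_taylor_rootMultiplicity_ne_zero hg b)
  rwa [show (m.cons _).degree = _ + m.degree from Finsupp.sum_cons n m _] at h

theorem sum_vanishOrder_cons_le (A : Finset F) {g : MvPolynomial (Fin (n + 1)) F} (hg : g ≠ 0)
    (a : Fin n → F) :
    ∑ b ∈ A, vanishOrder g (Fin.cons b a) ≤
      (finSuccEquiv F n g).natDegree +
        A.card * vanishOrder (finSuccEquiv F n g).leadingCoeff a := by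
  set G := finSuccEquiv F n g
  obtain ⟨m, hm, hdeg⟩ := exists_degree_eq_vanishOrder (leadingCoeff_finSuccEquiv_ne_zero hg) a
  have hc : lineCoeff a m g ≠ 0 := fun h => hm (by
    rw [Polynomial.leadingCoeff, ← coeff_lineCoeff, h, Polynomial.coeff_zero])
  calc ∑ b ∈ A, vanishOrder g (Fin.cons b a)
      ≤ ∑ b ∈ A, ((lineCoeff a m g).rootMultiplicity b + vanishOrder G.leadingCoeff a) :=
        Finset.sum_le_sum fun b _ => hdeg ▸ vanishOrder_cons_le b a hc
    _ = ∑ b ∈ A, (lineCoeff a m g).rootMultiplicity b +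
          A.card * vanishOrder G.leadingCoeff a := by
        rw [Finset.sum_add_distrib, Finset.sum_const, smul_eq_mul]
    _ ≤ G.natDegree + A.card * vanishOrder G.leadingCoeff a := by
        gcongr
        exact (Polynomial.sum_rootMultiplicity_le_natDegree _ A).trans
          (natDegree_lineCoeff_le a m g)

end line

/-- Schwartz–Zippel with multiplicities: for a finite `A ⊆ F` and nonzero
`g ∈ F[x₁,…,xₙ]`, the sum over `p ∈ Aⁿ` of the vanishing order of `g` at `p` is at most
`|A|^{n-1} · deg g`. -/
theorem schwartz_zippel_with_multiplicities {n : ℕ} (A : Finset F)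
    (g : MvPolynomial (Fin n) F) (hg : g ≠ 0) :
    ∑ p ∈ Fintype.piFinset (fun _ : Fin n => A), vanishOrder g p ≤
      A.card ^ (n - 1) * g.totalDegree := by
  induction n with
  | zero => simp [vanishOrder_fin_zero hg]
  | succ n ih =>
    set G := finSuccEquiv F n g
    have hG : G.leadingCoeff ≠ 0 := leadingCoeff_finSuccEquiv_ne_zero hg
    -- at `n = 0` the exponent `n - 1` of the hypothesis truncates, but the sum is then `0`
    have hlead : A.card * ∑ a ∈ Fintype.piFinset (fun _ : Fin n => A), vanishOrder G.leadingCoeff a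
        ≤ A.card ^ n * G.leadingCoeff.totalDegree := by
      rcases n with _ | n
      · simp [vanishOrder_fin_zero hG]
      · calc _ ≤ A.card * (A.card ^ n * G.leadingCoeff.totalDegree) :=
              Nat.mul_le_mul_left _ (ih _ hG)
          _ = _ := by ring
    calc ∑ p ∈ Fintype.piFinset (fun _ => A), vanishOrder g p
        = ∑ a ∈ Fintype.piFinset (fun _ : Fin n => A), ∑ b ∈ A, vanishOrder g (Fin.cons b a) :=
          Fin.sum_piFinset_succ _ _
      _ ≤ ∑ a ∈ Fintype.piFinset (fun _ : Fin n => A),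
            (G.natDegree + A.card * vanishOrder G.leadingCoeff a) :=
          Finset.sum_le_sum fun a _ => sum_vanishOrder_cons_le A hg a
      _ ≤ A.card ^ n * (G.natDegree + G.leadingCoeff.totalDegree) := by
          rw [Finset.sum_add_distrib, Finset.sum_const, Fintype.card_piFinset_const, smul_eq_mul,
            ← Finset.mul_sum, mul_add]
          gcongr
      _ ≤ A.card ^ (n + 1 - 1) * g.totalDegree := by
          rw [Nat.add_sub_cancel, add_comm]
          gcongr
          exact totalDegree_coeff_finSuccEquiv_add_le g _ hG
end

section
/- Let P be a finite set of points in F² and for v ∈ ℤ_{≥0}^P let T(v,n) ⊆ F[x,y]_{≤n} be the subspace of polynomials vanishing to order at least v_p at each p ∈ P. Define b_p(v,n) = dim T(v,n) − dim T(v+e_p,n). If v⁽¹⁾ ≥ v⁽²⁾ coordinatewise with equality at the coordinate p, then b_p(v⁽¹⁾,n) ≤ b_p(v⁽²⁾,n). -/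
open MvPolynomial

variable {F : Type*} [Field F]

/-- The subspace of polynomials in `F[x,y]` vanishing to order at least `m` at `p`:
all monomials of total degree `< m` in the Taylor expansion around `p` have zero
coefficient. -/
noncomputable def vanishingSubmodule (p : Fin 2 → F) (m : ℕ) :
    Submodule F (MvPolynomial (Fin 2) F) :=
  ⨅ (ω : Fin 2 →₀ ℕ) (_ : (ω.sum fun _ e => e) < m),
    LinearMap.ker ((lcoeff F ω).comp
      (aeval (fun i => X i + C (p i)) :
        MvPolynomial (Fin 2) F →ₐ[F] MvPolynomial (Fin 2) F).toLinearMap)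

/-- `T(v, n)`: the subspace of polynomials of degree at most `n` vanishing to order at
least `v p` at each point `p ∈ P`. -/
noncomputable def T (P : Finset (Fin 2 → F)) (v : (Fin 2 → F) → ℕ) (n : ℕ) :
    Submodule F (MvPolynomial (Fin 2) F) :=
  restrictTotalDegree (Fin 2) F n ⊓ ⨅ p ∈ P, vanishingSubmodule p (v p)

/-- `b_p(v, n) = dim T(v,n) − dim T(v + e_p, n)`. -/
noncomputable def b [DecidableEq (Fin 2 → F)] (P : Finset (Fin 2 → F)) (p : Fin 2 → F)
    (v : (Fin 2 → F) → ℕ) (n : ℕ) : ℕ :=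
  Module.finrank F (T P v n) - Module.finrank F (T P (Function.update v p (v p + 1)) n)

/-!
`b_p(v, n)` is the dimension of the image of `T(v, n)` in the quotient of `F[x,y]` by the
polynomials vanishing to order `v_p + 1` at `p`, i.e. the number of independent conditions
that the extra order at `p` imposes on `T(v, n)`. For fixed `v_p` this image grows with
`T(v, n)`, and `T(v, n)` shrinks as `v` grows.
-/

namespace Submodule

variable {R V : Type*} [DivisionRing R] [AddCommGroup V] [Module R V]

lemma finrank_map_mkQ_eq (K A : Submodule R V) [Module.Finite R A] :
    Module.finrank R (A.map K.mkQ) = Module.finrank R A - Module.finrank R ↥(A ⊓ K) := by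
  have hker : LinearMap.ker (K.mkQ ∘ₗ A.subtype) ≃ₗ[R] ↥(A ⊓ K) := by
    rw [LinearMap.ker_comp, ker_mkQ, ← top_inf_eq (comap A.subtype K), ← comap_subtype_self A,
      ← comap_inf]
    exact comapSubtypeEquivOfLe inf_le_left
  have h := (K.mkQ ∘ₗ A.subtype).finrank_range_add_finrank_ker
  rw [LinearMap.range_comp, range_subtype, hker.finrank_eq] at h
  omega

lemma finrank_sub_finrank_inf_mono (K : Submodule R V) {A B : Submodule R V}
    [Module.Finite R B] (hAB : A ≤ B) :
    Module.finrank R A - Module.finrank R ↥(A ⊓ K) ≤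
      Module.finrank R B - Module.finrank R ↥(B ⊓ K) := by
  have : Module.Finite R A := finiteDimensional_of_le hAB
  rw [← finrank_map_mkQ_eq, ← finrank_map_mkQ_eq]
  exact finrank_mono (map_mono hAB)

end Submodule

lemma vanishingSubmodule_antitone (p : Fin 2 → F) : Antitone (vanishingSubmodule p) :=
  fun _ _ h => biInf_mono fun _ hω => hω.trans_le h

lemma T_antitone (P : Finset (Fin 2 → F)) (n : ℕ) {v₁ v₂ : (Fin 2 → F) → ℕ}
    (hle : ∀ q ∈ P, v₂ q ≤ v₁ q) : T P v₁ n ≤ T P v₂ n :=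
  inf_le_inf_left _ <| iInf_mono fun q => iInf_mono fun hq =>
    vanishingSubmodule_antitone q (hle q hq)

instance T.finite (P : Finset (Fin 2 → F)) (v : (Fin 2 → F) → ℕ) (n : ℕ) :
    Module.Finite F (T P v n) :=
  Submodule.finiteDimensional_of_le inf_le_left

lemma T_update [DecidableEq (Fin 2 → F)] {P : Finset (Fin 2 → F)} {p : Fin 2 → F}
    (hp : p ∈ P) (v : (Fin 2 → F) → ℕ) {m : ℕ} (hm : v p ≤ m) (n : ℕ) :
    T P (Function.update v p m) n = T P v n ⊓ vanishingSubmodule p m := by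
  have hrest : ⨅ q ∈ P.erase p, vanishingSubmodule q (Function.update v p m q) =
      ⨅ q ∈ P.erase p, vanishingSubmodule q (v q) :=
    biInf_congr fun q hq => by rw [Function.update_of_ne (Finset.ne_of_mem_erase hq)]
  have hmono := vanishingSubmodule_antitone p hm
  rw [T, T, ← Finset.insert_erase hp, Finset.iInf_insert, Finset.iInf_insert, hrest,
    Function.update_self]
  nth_rw 1 [← inf_eq_right.mpr hmono]
  ac_rfl

/-- Monotonicity: if `v⁽¹⁾ ≥ v⁽²⁾` coordinatewise with equality at `p`, then
`b_p(v⁽¹⁾, n) ≤ b_p(v⁽²⁾, n)`. -/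
theorem b_monotone [DecidableEq (Fin 2 → F)] (P : Finset (Fin 2 → F)) (p : Fin 2 → F) (hp : p ∈ P) (n : ℕ)
    (v₁ v₂ : (Fin 2 → F) → ℕ) (hle : ∀ q ∈ P, v₂ q ≤ v₁ q) (heq : v₁ p = v₂ p) :
    b P p v₁ n ≤ b P p v₂ n := by
  rw [b, b, T_update hp v₁ (Nat.le_succ _), T_update hp v₂ (Nat.le_succ _), heq]
  exact Submodule.finrank_sub_finrank_inf_mono _ (T_antitone P n hle)
end

section
/- Let P be a finite set of points in F² (with F infinite), p, q ∈ P distinct, v ∈ ℤ_{≥0}^P, and n ≥ 1. With T(v,n) the space of polynomials of degree ≤ n vanishing to order ≥ v_r at each r ∈ P, and b_p(v,n) = dim T(v,n) − dim T(v+e_p,n), one has b_p(v + e_q, n) ≥ b_p(v, n−1). -/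
/-!
Pick a coordinate `i` with `p i ≠ q i` and let `ℓ = X i - q i`. Multiplication by `ℓ` raises
the degree by one and the vanishing order at `q` by one, so it maps `T(v, n-1)` into
`T(v + e_q, n)`. Since `ℓ(p) ≠ 0`, the translate of `ℓ` to `p` is a unit in the power series
ring, so multiplication by `ℓ` preserves the vanishing order at `p` exactly. Hence `ℓ` induces
an injection `T(v, n-1) / T(v + e_p, n-1) → T(v + e_q, n) / T(v + e_q + e_p, n)`.
-/

open MvPolynomial

variable {F : Type*} [Field F]

open Module

theorem Submodule.finrank_sub_finrank_le_of_le_comap {K M N : Type*} [DivisionRing K]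
    [AddCommGroup M] [Module K M] [AddCommGroup N] [Module K N]
    {A A' : Submodule K M} {B B' : Submodule K N} [FiniteDimensional K A] [FiniteDimensional K B]
    (hA : A' ≤ A) (hB : B' ≤ B) (f : M →ₗ[K] N) (hAB : A ≤ B.comap f)
    (hA' : A ⊓ B'.comap f ≤ A') :
    finrank K A - finrank K A' ≤ finrank K B - finrank K B' := by
  let B'' := B'.comap B.subtype
  let ψ : A →ₗ[K] B ⧸ B'' := B''.mkQ ∘ₗ f.restrict hAB
  have : FiniteDimensional K A' := Submodule.finiteDimensional_of_le hA
  have hker : finrank K (LinearMap.ker ψ) ≤ finrank K A' := by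
    rw [← Submodule.finrank_map_subtype_eq]
    refine Submodule.finrank_mono ?_
    rintro _ ⟨x, hx, rfl⟩
    exact hA' ⟨x.2, by simpa [ψ, B''] using hx⟩
  have hrange := (LinearMap.range ψ).finrank_le
  have hB'' : finrank K B'' = finrank K B' := (Submodule.comapSubtypeEquivOfLe hB).finrank_eq
  have := ψ.finrank_range_add_finrank_ker
  have := B''.finrank_quotient_add_finrank
  omega

theorem MvPowerSeries.order_mul_of_isUnit_left {σ R : Type*} [CommSemiring R]
    {u f : MvPowerSeries σ R} (hu : IsUnit u) : (u * f).order = f.order := by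
  refine le_antisymm ?_ (le_trans (by simp) MvPowerSeries.le_order_mul)
  obtain ⟨v, hv⟩ := hu.exists_left_inv
  calc (u * f).order ≤ v.order + (u * f).order := le_add_self
    _ ≤ (v * (u * f)).order := MvPowerSeries.le_order_mul
    _ = f.order := by rw [← mul_assoc, hv, one_mul]

section OrderAt

variable {σ R : Type*} [CommRing R]

/-- The vanishing order of `f` at the point `p`: the order of its Taylor expansion at `p`. -/
noncomputable def orderAt (p : σ → R) (f : MvPolynomial σ R) : ℕ∞ :=
  ((aeval (fun i => X i + C (p i)) f : MvPolynomial σ R) : MvPowerSeries σ R).order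

theorem constantCoeff_coe_aeval_X_add_C (p : σ → R) (f : MvPolynomial σ R) :
    MvPowerSeries.constantCoeff
      ((aeval (fun i => X i + C (p i)) f : MvPolynomial σ R) : MvPowerSeries σ R) =
      eval p f := by
  rw [← MvPowerSeries.coeff_zero_eq_constantCoeff_apply, coeff_coe, ← constantCoeff_eq]
  induction f using MvPolynomial.induction_on <;> simp_all

theorem one_le_orderAt_iff {p : σ → R} {f : MvPolynomial σ R} :
    1 ≤ orderAt p f ↔ eval p f = 0 := by
  rw [orderAt, MvPowerSeries.one_le_order_iff_constCoeff_eq_zero,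
    constantCoeff_coe_aeval_X_add_C]

theorem le_orderAt_mul (p : σ → R) (f g : MvPolynomial σ R) :
    orderAt p f + orderAt p g ≤ orderAt p (f * g) := by
  simpa only [orderAt, map_mul, coe_mul] using MvPowerSeries.le_order_mul

theorem orderAt_mul_of_isUnit_eval {p : σ → R} {ℓ : MvPolynomial σ R}
    (hℓ : IsUnit (eval p ℓ)) (f : MvPolynomial σ R) : orderAt p (ℓ * f) = orderAt p f := by
  rw [orderAt, map_mul, coe_mul, MvPowerSeries.order_mul_of_isUnit_left, orderAt]
  rwa [MvPowerSeries.isUnit_iff_constantCoeff, constantCoeff_coe_aeval_X_add_C]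

end OrderAt

theorem mem_vanishingSubmodule_iff {p : Fin 2 → F} {m : ℕ} {f : MvPolynomial (Fin 2) F} :
    f ∈ vanishingSubmodule p m ↔ m ≤ orderAt p f := by
  simp only [vanishingSubmodule, Submodule.mem_iInf, LinearMap.mem_ker, LinearMap.comp_apply,
    lcoeff_apply, AlgHom.toLinearMap_apply]
  refine ⟨fun h => MvPowerSeries.nat_le_order fun d hd => ?_, fun h d hd => ?_⟩
  · rw [coeff_coe]
    exact h d hd
  · rw [← coeff_coe]
    exact MvPowerSeries.coeff_of_lt_order (lt_of_lt_of_le (by exact_mod_cast hd) h)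

theorem mem_T {P : Finset (Fin 2 → F)} {v : (Fin 2 → F) → ℕ} {n : ℕ}
    {f : MvPolynomial (Fin 2) F} :
    f ∈ T P v n ↔ f.totalDegree ≤ n ∧ ∀ r ∈ P, (v r : ℕ∞) ≤ orderAt r f := by
  simp [T, Submodule.mem_iInf, mem_restrictTotalDegree, mem_vanishingSubmodule_iff]

theorem T_anti {P : Finset (Fin 2 → F)} {v w : (Fin 2 → F) → ℕ} {n : ℕ} (h : v ≤ w) :
    T P w n ≤ T P v n := fun f hf => by
  rw [mem_T] at hf ⊢
  exact ⟨hf.1, fun r hr => le_trans (by exact_mod_cast h r) (hf.2 r hr)⟩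

instance (P : Finset (Fin 2 → F)) (v : (Fin 2 → F) → ℕ) (n : ℕ) :
    FiniteDimensional F (T P v n) :=
  Submodule.finiteDimensional_of_le inf_le_left

section Update

variable [DecidableEq (Fin 2 → F)] {P : Finset (Fin 2 → F)} {v : (Fin 2 → F) → ℕ} {n : ℕ}
  {ℓ f : MvPolynomial (Fin 2) F}

theorem mul_mem_T_update {q : Fin 2 → F} (hℓ : ℓ.totalDegree ≤ 1) (hℓq : eval q ℓ = 0)
    (hf : f ∈ T P v n) : ℓ * f ∈ T P (Function.update v q (v q + 1)) (n + 1) := by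
  rw [mem_T] at hf ⊢
  refine ⟨(totalDegree_mul ℓ f).trans (by omega), fun r hr => ?_⟩
  refine le_trans ?_ (le_orderAt_mul r ℓ f)
  rcases eq_or_ne r q with rfl | hrq
  · rw [Function.update_self, Nat.cast_add, Nat.cast_one, add_comm]
    exact add_le_add (one_le_orderAt_iff.mpr hℓq) (hf.2 r hr)
  · rw [Function.update_of_ne hrq]
    exact le_add_left (hf.2 r hr)

theorem mem_T_update_of_mul_mem {p : Fin 2 → F} {w : (Fin 2 → F) → ℕ} {m : ℕ}
    (hℓ : IsUnit (eval p ℓ)) (hf : f ∈ T P v n) (hℓf : ℓ * f ∈ T P w m) (hw : w p = v p + 1) :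
    f ∈ T P (Function.update v p (v p + 1)) n := by
  rw [mem_T] at hf hℓf ⊢
  refine ⟨hf.1, fun r hr => ?_⟩
  rcases eq_or_ne r p with rfl | hrp
  · simpa [hw, orderAt_mul_of_isUnit_eval hℓ] using hℓf.2 r hr
  · simpa [Function.update_of_ne hrp] using hf.2 r hr

end Update

theorem b_add_eq_ge_general [DecidableEq (Fin 2 → F)]
    (P : Finset (Fin 2 → F)) (p q : Fin 2 → F) (hpq : p ≠ q)
    (v : (Fin 2 → F) → ℕ) (n : ℕ) (hn : 1 ≤ n) :
    b P p v (n - 1) ≤ b P p (Function.update v q (v q + 1)) n := by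
  obtain ⟨m, rfl⟩ : ∃ m, n = m + 1 := ⟨n - 1, by omega⟩
  obtain ⟨i, hi⟩ := Function.ne_iff.mp hpq
  have hℓ_deg : (X i - C (q i) : MvPolynomial (Fin 2) F).totalDegree ≤ 1 :=
    (totalDegree_sub_C_le _ _).trans (totalDegree_X i).le
  have hℓ_unit : IsUnit (eval p (X i - C (q i))) := by simpa [sub_eq_zero] using hi
  rw [b, b, add_tsub_cancel_right]
  exact Submodule.finrank_sub_finrank_le_of_le_comap
    (T_anti (le_update_self_iff.mpr (Nat.le_succ _)))
    (T_anti (le_update_self_iff.mpr (Nat.le_succ _)))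
    (LinearMap.mulLeft F (X i - C (q i)))
    (fun f hf => mul_mem_T_update hℓ_deg (by simp) hf)
    (fun f ⟨hf, hℓf⟩ => mem_T_update_of_mul_mem hℓ_unit hf hℓf (by simp [hpq]))

/-- For distinct `p, q ∈ P` (over an infinite field), increasing the required vanishing
order at `q` by one does not decrease the count of new conditions at `p`, at the cost of
one in the degree: `b_p(v + e_q, n) ≥ b_p(v, n−1)`. -/
theorem b_add_eq_ge [Infinite F] [DecidableEq (Fin 2 → F)]
    (P : Finset (Fin 2 → F)) (p q : Fin 2 → F) (hp : p ∈ P) (hq : q ∈ P) (hpq : p ≠ q)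
    (v : (Fin 2 → F) → ℕ) (n : ℕ) (hn : 1 ≤ n) :
    b P p v (n - 1) ≤ b P p (Function.update v q (v q + 1)) n :=
  b_add_eq_ge_general P p q hpq v n hn
end

section
/- Let V be an irreducible affine variety in F^d and let R_{V,≤n} be the image of the degree-≤n polynomials in the coordinate ring R_V. Then for each point p ∈ V there exists C (depending on n, V, p) such that m_p^C ∩ R_{V,≤n} = 0, where m_p is the maximal ideal of functions vanishing at p; i.e., a nonzero regular function on V representable by a polynomial of degree at most n cannot vanish at p to arbitrarily high order. -/
set_option synthInstance.maxHeartbeats 1000000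
set_option maxHeartbeats 1000000

open MvPolynomial

variable {F : Type*} [Field F]

/-- The maximal ideal `m_p` of regular functions on `V` vanishing at `p`, inside the
coordinate ring `R_V = F[x₁,…,x_d]/I(V)`. -/
noncomputable def maximalIdealAt {d : ℕ} (V : Set (Fin d → F)) (p : Fin d → F) :
    Ideal (MvPolynomial (Fin d) F ⧸ MvPolynomial.vanishingIdeal F V) :=
  Ideal.map (Ideal.Quotient.mk (MvPolynomial.vanishingIdeal F V)) (RingHom.ker (eval p))

/-!
By Krull's intersection theorem in the Noetherian domain `R_V`, the powers of the proper ideal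
`m_p` intersect in `0`. Intersected with the finite-dimensional space `R_{V,≤n}`, they form a
descending chain of subspaces, which must stabilize; its stable value is then the full
intersection, i.e. `0`.
-/

theorem Submodule.exists_inf_eq_bot_of_iInf_eq_bot {R M : Type*} [Ring R] [AddCommGroup M]
    [Module R M] (W : Submodule R M) [IsArtinian R W] {N : ℕ → Submodule R M}
    (hN : Antitone N) (hbot : ⨅ i, N i = ⊥) : ∃ C, W ⊓ N C = ⊥ := by
  obtain ⟨C, hC⟩ := IsArtinian.monotone_stabilizes
    ⟨fun i => OrderDual.toDual ((N i).comap W.subtype), fun _ _ h => comap_mono (hN h)⟩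
  refine ⟨C, eq_bot_iff.2 fun x ⟨hxW, hxC⟩ => ?_⟩
  have hx : ∀ i, x ∈ N i := fun i => by
    rcases le_total i C with h | h
    · exact hN h hxC
    · change (⟨x, hxW⟩ : W) ∈ (N i).comap W.subtype
      rw [← OrderDual.toDual_inj.1 (hC i h)]
      exact hxC
  rw [← hbot]
  exact mem_iInf _ |>.2 hx

theorem maximalIdealAt_ne_top {d : ℕ} {V : Set (Fin d → F)} {p : Fin d → F} (hp : p ∈ V) :
    maximalIdealAt V p ≠ ⊤ :=
  ne_top_of_le_ne_top (RingHom.ker_ne_top (Ideal.Quotient.lift _ (eval p)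
    fun _ ha => mem_vanishingIdeal_iff.1 ha p hp))
    (Ideal.map_le_iff_le_comap.2 fun _ ha => ha)

/-- A nonzero regular function on an irreducible variety `V` that is representable by a
polynomial of degree at most `n` cannot vanish to arbitrarily high order at a point
`p ∈ V`: there is `C` (depending on `n`, `V`, `p`) with `m_p^C ∩ R_{V,≤n} = 0`. -/
theorem exists_pow_maximalIdealAt_inter_lowDegree_eq_zero {d : ℕ}
    (V : Set (Fin d → F)) (p : Fin d → F) (hp : p ∈ V)
    (hprime : (MvPolynomial.vanishingIdeal F V).IsPrime) (n : ℕ) :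
    ∃ C : ℕ, ∀ g : MvPolynomial (Fin d) F, g.totalDegree ≤ n →
      Ideal.Quotient.mk (MvPolynomial.vanishingIdeal F V) g ∈ maximalIdealAt V p ^ C →
      Ideal.Quotient.mk (MvPolynomial.vanishingIdeal F V) g = 0 := by
  let I := vanishingIdeal F V
  let W := (restrictTotalDegree (Fin d) F n).map (Ideal.Quotient.mkₐ F I).toLinearMap
  let N i := (maximalIdealAt V p ^ i).restrictScalars F
  have hbot : ⨅ i, N i = ⊥ := by
    rw [← Submodule.restrictScalars_iInf,
      Ideal.iInf_pow_eq_bot_of_isDomain _ (maximalIdealAt_ne_top hp),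
      Submodule.restrictScalars_bot]
  obtain ⟨C, hC⟩ := W.exists_inf_eq_bot_of_iInf_eq_bot
    (fun _ _ h => Ideal.pow_le_pow_right h) hbot
  refine ⟨C, fun g hg hgC => ?_⟩
  have hgW : Ideal.Quotient.mk I g ∈ W ⊓ N C :=
    ⟨⟨g, (mem_restrictTotalDegree _ _ _).2 hg, rfl⟩, hgC⟩
  simpa [hC] using hgW
end

section
/- Let h ∈ F[[x]] be a formal power series with no constant or linear term, and consider the plane curve V in F² 'parametrized' by y = h(x). For each r ≥ 0 and each polynomial g ∈ F[x,y], the coefficient of x^r in the power series g(x, h(x)) is a fixed F-linear combination (depending only on h and r, not on g) of the values (Hasse^{(i,j)} g)(0,0) over multi-indices (i,j) with i + j ≤ r; moreover the coefficient of (Hasse^{(r,0)} g)(0,0) in this combination is 1. -/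
open MvPolynomial

variable {F : Type*} [Field F]

/-- The multivariate Hasse derivative `Hasse^ω`, defined on monomials by
`Hasse^ω x^δ = binom(δ, ω) x^{δ−ω}`. -/
noncomputable def hasseDeriv {d : ℕ} (ω : Fin d →₀ ℕ) (g : MvPolynomial (Fin d) F) :
    MvPolynomial (Fin d) F :=
  ∑ δ ∈ g.support, monomial (δ - ω) ((∏ i, (δ i).choose (ω i) : ℕ) * coeff δ g)

/-!
Expanding `g = ∑ gδ x^δ₀ y^δ₁` gives `g(x, h(x)) = ∑ gδ x^δ₀ h^δ₁`, and `gδ = (Hasse^δ g)(0,0)`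
since `Hasse^ω` evaluated at the origin only sees the monomial `x^ω`. So `c ω = [x^r] x^ω₀ h^ω₁`
works: it is `1` at `ω = (r,0)`, and it vanishes when `ω₀ + ω₁ > r` because `x ∣ h`.
-/

lemma prod_choose_eq_zero_of_not_le {σ : Type*} [Fintype σ] {δ ω : σ →₀ ℕ} (h : ¬ω ≤ δ) :
    ∏ i, (δ i).choose (ω i) = 0 := by
  obtain ⟨i, hi⟩ : ∃ i, δ i < ω i := by simpa [Finsupp.le_def] using h
  exact Finset.prod_eq_zero (Finset.mem_univ i) (Nat.choose_eq_zero_of_lt hi)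

lemma eval_zero_hasseDeriv {d : ℕ} (ω : Fin d →₀ ℕ) (g : MvPolynomial (Fin d) F) :
    eval (fun _ => (0 : F)) (hasseDeriv ω g) = coeff ω g := by
  classical
  change eval 0 _ = _
  rw [hasseDeriv, map_sum, eval_zero]
  simp only [constantCoeff_monomial, tsub_eq_zero_iff_le]
  refine (Finset.sum_eq_single ω (fun δ _ hne => ?_) (fun hω => ?_)).trans (by simp)
  · split_ifs with hle
    · rw [prod_choose_eq_zero_of_not_le fun hge => hne (le_antisymm hle hge)]
      simp
    · rfl
  · simp [notMem_support_iff.mp hω]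

lemma finsum_mul_coeff {σ R : Type*} [CommSemiring R] (c : (σ →₀ ℕ) → R)
    (g : MvPolynomial σ R) :
    ∑ᶠ ω, c ω * coeff ω g = ∑ ω ∈ g.support, c ω * coeff ω g :=
  finsum_eq_sum_of_support_subset _
    ((Function.support_mul_subset_right _ _).trans fun _ => mem_support_iff.mpr)

lemma PowerSeries.coeff_aeval_mvPolynomial {σ R : Type*} [Fintype σ] [CommSemiring R]
    (f : σ → PowerSeries R) (g : MvPolynomial σ R) (r : ℕ) :
    coeff r (MvPolynomial.aeval f g) =
      ∑ δ ∈ g.support, coeff r (∏ i, f i ^ δ i) * MvPolynomial.coeff δ g := by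
  rw [aeval_def, eval₂_eq', map_sum]
  refine Finset.sum_congr rfl fun δ _ => ?_
  rw [← Algebra.smul_def, coeff_smul, smul_eq_mul, mul_comm]

lemma PowerSeries.coeff_prod_pow_eq_zero {σ R : Type*} [Fintype σ] [CommSemiring R]
    {f : σ → PowerSeries R} (hf : ∀ i, X ∣ f i) {ω : σ →₀ ℕ} {r : ℕ}
    (hr : r < ω.sum fun _ e => e) : coeff r (∏ i, f i ^ ω i) = 0 := by
  have hdvd : (X : PowerSeries R) ^ (ω.sum fun _ e => e) ∣ ∏ i, f i ^ ω i := by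
    rw [Finsupp.sum_fintype _ _ fun _ => rfl, ← Finset.prod_pow_eq_pow_sum]
    exact Finset.prod_dvd_prod_of_dvd _ _ fun i _ => pow_dvd_pow_of_dvd (hf i) _
  exact X_pow_dvd_iff.mp hdvd r hr

theorem exists_deriv_along_curve_general (h : PowerSeries F)
    (h0 : PowerSeries.coeff 0 h = 0) (r : ℕ) :
    ∃ c : (Fin 2 →₀ ℕ) → F,
      c (Finsupp.single 0 r) = 1 ∧
      (∀ ω : Fin 2 →₀ ℕ, r < ω.sum (fun _ e => e) → c ω = 0) ∧
      ∀ g : MvPolynomial (Fin 2) F,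
        PowerSeries.coeff r (aeval ![PowerSeries.X, h] g) =
          ∑ᶠ ω : Fin 2 →₀ ℕ, c ω * eval (fun _ => (0 : F)) (hasseDeriv ω g) := by
  refine ⟨fun ω => PowerSeries.coeff r (∏ i, ![PowerSeries.X, h] i ^ ω i), ?_, fun ω hω => ?_,
    fun g => ?_⟩
  · simp [Fin.prod_univ_two, PowerSeries.coeff_X_pow]
  · have hX : PowerSeries.X ∣ h := by
      rwa [PowerSeries.X_dvd_iff, ← PowerSeries.coeff_zero_eq_constantCoeff_apply]
    exact PowerSeries.coeff_prod_pow_eq_zero (Fin.forall_fin_two.mpr ⟨dvd_rfl, hX⟩) hω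
  · simp only [eval_zero_hasseDeriv, finsum_mul_coeff, PowerSeries.coeff_aeval_mvPolynomial]

/-- Let `h ∈ F[[x]]` have no constant or linear term, and consider the curve `y = h(x)`.
For each `r` there is a fixed linear combination (depending only on `h` and `r`) of the
Hasse derivative evaluations `(Hasse^{(i,j)} g)(0,0)` with `i + j ≤ r`, with coefficient
`1` on `Hasse^{(r,0)}`, computing the coefficient of `x^r` in `g(x, h(x))` for all `g`. -/
theorem exists_deriv_along_curve (h : PowerSeries F)
    (h0 : PowerSeries.coeff 0 h = 0) (h1 : PowerSeries.coeff 1 h = 0) (r : ℕ) :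
    ∃ c : (Fin 2 →₀ ℕ) → F,
      c (Finsupp.single 0 r) = 1 ∧
      (∀ ω : Fin 2 →₀ ℕ, r < ω.sum (fun _ e => e) → c ω = 0) ∧
      ∀ g : MvPolynomial (Fin 2) F,
        PowerSeries.coeff r (aeval ![PowerSeries.X, h] g) =
          ∑ᶠ ω : Fin 2 →₀ ℕ, c ω * eval (fun _ => (0 : F)) (hasseDeriv ω g) :=
  exists_deriv_along_curve_general h h0 r
end
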